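/- Fix β ∈ (−1, 1]. For any inner product ⟨·,·⟩ on the Lie algebra A_{4,9}^β, there exist an ⟨·,·⟩-orthonormal basis f₁, f₂, f₃, f₄ of A_{4,9}^β and real numbers a > 0, b > 0, c, d, f such that the brackets of basis vectors are [f₁,f₄] = a(1+β)f₁, [f₂,f₃] = b f₁, [f₂,f₄] = c f₁ + a f₂, [f₃,f₄] = d f₁ + f(1−β) f₂ + aβ f₃, and [f₁,f₂] = [f₁,f₃] = 0. -/

import Mathlib

open Matrix Polynomial

noncomputable section

variable {L : Type*} [LieRing L] [LieAlgebra ℝ L]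

/-- `Q` is an inner product on the real Lie algebra `L`: a symmetric positive definite
bilinear form. -/
def IsInnerProduct (Q : L →ₗ[ℝ] L →ₗ[ℝ] ℝ) : Prop :=
  (∀ x y, Q x y = Q y x) ∧ ∀ x, x ≠ 0 → 0 < Q x x

/-- `g` is a `Q`-orthonormal basis of `L`. -/
def IsOrthonormalBasis {ι : Type*} [DecidableEq ι] (Q : L →ₗ[ℝ] L →ₗ[ℝ] ℝ)
    (g : Module.Basis ι ℝ L) : Prop :=
  ∀ i j, Q (g i) (g j) = if i = j then 1 else 0

/-- The matrix of `ad (g i)` with respect to the basis `g`. -/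
def adMatrix {ι : Type*} [Fintype ι] [DecidableEq ι] (g : Module.Basis ι ℝ L) (i : ι) :
    Matrix ι ι ℝ :=
  LinearMap.toMatrix g g (LieAlgebra.ad ℝ L (g i))

/-- The matrix, in a `Q`-orthonormal basis `g`, of the Ricci operator
`Ric = -(1/2) ∑ᵢ ad_{gᵢ}* ∘ ad_{gᵢ} + (1/4) ∑ᵢ ad_{gᵢ} ∘ ad_{gᵢ}* - (1/2) B - (ad_H)ˢ`
of the metric Lie algebra `(L, Q)`:  in an orthonormal basis the adjoint `A*` corresponds
to the transposed matrix, the Killing operator `B` has matrix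
`(j,k) ↦ trace(ad(gⱼ) ∘ ad(g_k))`, and `H = ∑ᵢ trace(ad gᵢ) • gᵢ`, so that the matrix of
`ad_H` is `∑ᵢ trace(ad gᵢ) • (matrix of ad gᵢ)` and `(ad_H)ˢ = (1/2)(ad_H + ad_H*)`. -/
def ricciMatrix {ι : Type*} [Fintype ι] [DecidableEq ι] (g : Module.Basis ι ℝ L) : Matrix ι ι ℝ :=
  (-(1/2 : ℝ)) • ∑ i, (adMatrix g i)ᵀ * adMatrix g i
    + (1/4 : ℝ) • ∑ i, adMatrix g i * (adMatrix g i)ᵀ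
    - (1/2 : ℝ) • Matrix.of (fun j k => (adMatrix g j * adMatrix g k).trace)
    - (1/2 : ℝ) • ((∑ i, (adMatrix g i).trace • adMatrix g i)
        + (∑ i, (adMatrix g i).trace • adMatrix g i)ᵀ)

/-- `μ` lists the eigenvalues (with multiplicity, in nondecreasing order) of the
4×4 matrix `A`: `μ` is monotone and the characteristic polynomial of `A` is
`∏ᵢ (X - μ i)`. -/
def SortedEigenvalues (A : Matrix (Fin 4) (Fin 4) ℝ) (μ : Fin 4 → ℝ) : Prop :=
  Monotone μ ∧ A.charpoly = ∏ i, (X - C (μ i))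

end

open Submodule Finset in
instance A49aux_wellFoundedLT_fin4 : WellFoundedLT (Fin 4) := inferInstance

open Submodule Finset InnerProductSpace in
/-- Lemma 1, forward direction. Fix `β ∈ (-1, 1]`. For any inner
product on the Lie algebra `A_{4,9}^β` (nonzero brackets `[e₂,e₃] = e₁`,
`[e₁,e₄] = (1+β)e₁`, `[e₂,e₄] = e₂`, `[e₃,e₄] = βe₃`), there is an orthonormal basis
`g₁, g₂, g₃, g₄` and reals `a > 0`, `b > 0`, `c`, `d`, `f` with brackets
`[g₁,g₄] = a(1+β)g₁`, `[g₂,g₃] = b g₁`, `[g₂,g₄] = c g₁ + a g₂`,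
`[g₃,g₄] = d g₁ + f(1-β) g₂ + aβ g₃`, `[g₁,g₂] = [g₁,g₃] = 0`. -/
theorem A49_orthonormal_basis_normal_form (β : ℝ) (hβ : -1 < β ∧ β ≤ 1)
    (L : Type*) [LieRing L] [LieAlgebra ℝ L] (e : Module.Basis (Fin 4) ℝ L)
    (h23 : ⁅e 1, e 2⁆ = e 0) (h14 : ⁅e 0, e 3⁆ = (1 + β) • e 0)
    (h24 : ⁅e 1, e 3⁆ = e 1) (h34 : ⁅e 2, e 3⁆ = β • e 2)
    (h12 : ⁅e 0, e 1⁆ = 0) (h13 : ⁅e 0, e 2⁆ = 0)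
    (Q : L →ₗ[ℝ] L →ₗ[ℝ] ℝ) (hQ : IsInnerProduct Q) :
    ∃ g : Module.Basis (Fin 4) ℝ L, IsOrthonormalBasis Q g ∧
      ∃ a b c d f : ℝ, 0 < a ∧ 0 < b ∧
        ⁅g 0, g 3⁆ = (a * (1 + β)) • g 0 ∧
        ⁅g 1, g 2⁆ = b • g 0 ∧
        ⁅g 1, g 3⁆ = c • g 0 + a • g 1 ∧
        ⁅g 2, g 3⁆ = d • g 0 + (f * (1 - β)) • g 1 + (a * β) • g 2 ∧
        ⁅g 0, g 1⁆ = 0 ∧ ⁅g 0, g 2⁆ = 0 := by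
  classical
  obtain ⟨hsym, hpos⟩ := hQ
  letI K : InnerProductSpace.Core ℝ L :=
    { inner := fun x y => Q x y
      conj_inner_symm := fun x y => by simpa using hsym y x
      re_inner_nonneg := fun x => by
        by_cases hx : x = 0
        · simp [hx]
        · exact (hpos x hx).le
      add_left := fun x y z => by simp
      smul_left := fun x y r => by simp [mul_comm]
      definite := fun x hx => by
        by_contra h
        exact absurd hx (ne_of_gt (hpos x h)) }
  letI : NormedAddCommGroup L := K.toNormedAddCommGroup
  letI : InnerProductSpace ℝ L := InnerProductSpace.ofCore K.toCore
  haveI : FiniteDimensional ℝ L := Module.Finite.of_basis e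
  have hinner : ∀ x y : L, (inner ℝ x y : ℝ) = Q x y := fun _ _ => rfl
  set GS : Fin 4 → L := gramSchmidt ℝ e with hGSdef
  set G : Fin 4 → L := gramSchmidtNormed ℝ e with hGdef
  have hli := e.linearIndependent
  have horth : Orthonormal ℝ G := gramSchmidtNormed_orthonormal hli
  have hGspan : ⊤ ≤ span ℝ (Set.range G) := by
    rw [hGdef, span_gramSchmidtNormed_range, span_gramSchmidt, e.span_eq]
  let g : Module.Basis (Fin 4) ℝ L := Module.Basis.mk horth.linearIndependent hGspan
  have hg : ∀ i, g i = G i := fun i => by simp [g]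
  have horthQ : IsOrthonormalBasis Q g := by
    intro i j
    rw [hg, hg, ← hinner]
    exact orthonormal_iff_ite.mp horth i j
  -- coordinate facts
  have hmemIic : ∀ n : Fin 4, GS n ∈ span ℝ (e '' Set.Iic n) :=
    fun n => gramSchmidt_mem_span ℝ e le_rfl
  have hdiff : ∀ n : Fin 4, e n - GS n ∈ span ℝ (e '' Set.Iio n) := by
    intro n
    have hsum : e n - GS n
        = ∑ i ∈ Iio n, (ℝ ∙ GS i).starProjection (e n) := by
      rw [hGSdef, gramSchmidt_def]
      exact (sub_sub_cancel _ _)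
    rw [hsum]
    refine Submodule.sum_mem _ fun i hi => ?_
    have hin : i < n := Finset.mem_Iio.mp hi
    have h1 : (ℝ ∙ GS i) ≤ span ℝ (e '' Set.Iio n) := by
      rw [Submodule.span_singleton_le_iff_mem]
      exact span_mono (Set.image_mono (fun j hj => lt_of_le_of_lt hj hin)) (hmemIic i)
    exact h1 (SetLike.coe_mem _)
  have hrz : ∀ n j : Fin 4, n < j → e.repr (GS n) j = 0 := by
    intro n j hnj
    have hsupp := e.mem_span_image.mp (hmemIic n)
    refine Finsupp.notMem_support_iff.mp fun hj => ?_
    exact absurd (hsupp hj) (by simp [Set.mem_Iic, not_le.mpr hnj])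
  have hrd : ∀ n : Fin 4, e.repr (GS n) n = 1 := by
    intro n
    have hsupp := e.mem_span_image.mp (hdiff n)
    have h0 : e.repr (e n - GS n) n = 0 :=
      Finsupp.notMem_support_iff.mp fun hj => absurd (hsupp hj) (by simp)
    rw [map_sub] at h0
    simp only [Finsupp.sub_apply, e.repr_self, Finsupp.single_eq_same] at h0
    linarith
  have hGN : ∀ n, G n = (‖GS n‖⁻¹ : ℝ) • GS n := fun n => by
    rw [hGdef, hGSdef]; rfl
  have hNpos : ∀ n, (0:ℝ) < ‖GS n‖⁻¹ := fun n =>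
    inv_pos.mpr (norm_pos_iff.mpr (gramSchmidt_ne_zero n hli))
  have hGrz : ∀ n j : Fin 4, n < j → e.repr (G n) j = 0 := by
    intro n j hnj; rw [hGN, _root_.map_smul]; simp [hrz n j hnj]
  have hGrd : ∀ n : Fin 4, e.repr (G n) n = ‖GS n‖⁻¹ := by
    intro n; rw [hGN, _root_.map_smul]; simp [hrd n]
  set p := e.repr (G 0) 0 with hpdef
  set q := e.repr (G 1) 0 with hqdef
  set r := e.repr (G 1) 1 with hrdef
  set s := e.repr (G 2) 0 with hsdef
  set t := e.repr (G 2) 1 with htdef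
  set u := e.repr (G 2) 2 with hudef
  set v := e.repr (G 3) 0 with hvdef
  set w := e.repr (G 3) 1 with hwdef
  set x := e.repr (G 3) 2 with hxdef
  set y := e.repr (G 3) 3 with hydef
  have hp : 0 < p := by rw [hpdef, hGrd]; exact hNpos 0
  have hr : 0 < r := by rw [hrdef, hGrd]; exact hNpos 1
  have hu : 0 < u := by rw [hudef, hGrd]; exact hNpos 2
  have hy : 0 < y := by rw [hydef, hGrd]; exact hNpos 3
  have hG0 : G 0 = p • e 0 := by
    have h := (e.sum_repr (G 0)).symm
    rw [Fin.sum_univ_four, hGrz 0 1 (by decide), hGrz 0 2 (by decide),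
      hGrz 0 3 (by decide)] at h
    simpa using h
  have hG1 : G 1 = q • e 0 + r • e 1 := by
    have h := (e.sum_repr (G 1)).symm
    rw [Fin.sum_univ_four, hGrz 1 2 (by decide), hGrz 1 3 (by decide)] at h
    simpa using h
  have hG2 : G 2 = s • e 0 + t • e 1 + u • e 2 := by
    have h := (e.sum_repr (G 2)).symm
    rw [Fin.sum_univ_four, hGrz 2 3 (by decide)] at h
    simpa using h
  have hG3 : G 3 = v • e 0 + w • e 1 + x • e 2 + y • e 3 := by
    have h := e.sum_repr (G 3)
    rw [Fin.sum_univ_four] at h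
    rw [hvdef, hwdef, hxdef, hydef]
    exact h.symm
  -- reversed brackets
  have h21 : ⁅e 1, e 0⁆ = 0 := by rw [← neg_eq_zero, lie_skew]; exact h12
  have h31 : ⁅e 2, e 0⁆ = 0 := by rw [← neg_eq_zero, lie_skew]; exact h13
  have h32 : ⁅e 2, e 1⁆ = -e 0 := by rw [← lie_skew, h23]
  refine ⟨g, horthQ, y, (r * u) / p, (r * x + q * y * β) / p,
    (t * x - u * w + s * y - (t * y / r) * (1 - β) * q) / p, t * y / r, hy,
    div_pos (mul_pos hr hu) hp, ?_, ?_, ?_, ?_, ?_, ?_⟩ <;>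
  · simp only [hg, hG0, hG1, hG2, hG3]
    simp only [lie_add, add_lie, lie_smul, smul_lie, lie_self, h12, h13, h14, h21, h23,
      h24, h31, h32, h34, smul_zero, zero_add, add_zero, smul_neg, smul_smul, zero_smul]
    try (match_scalars <;> (try field_simp) <;> (try ring))
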